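/- (Upper bound in the thermodynamic limit) Let f : X → ℝ be continuous, let β_n → +∞ be positive reals, and for each n let μ_n ∈ 𝔐 satisfy h(μ_n) + ∫_X (−β_n a + f) dμ_n = P(−β_n a + f), where P(g) := sup_{μ∈𝔐} ( h(μ) + ∫_X g dμ ). If μ_n converges weakly to μ_∞, then limsup_{n→∞} P(−β_n a + f) ≤ h(μ_∞) + ∫_X f dμ_∞ ≤ P_K(f), where P_K(f) := sup { h(μ) + ∫_X f dμ : μ ∈ 𝔐, μ(K) = 1 }. -/

import Mathlib

open MeasureTheory Filter Topology Set

noncomputable section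

/-- A continuous flow on `X`. -/
def IsFlow {X : Type*} [TopologicalSpace X] (Φ : ℝ → X → X) : Prop :=
  Continuous (fun p : ℝ × X => Φ p.1 p.2) ∧ Φ 0 = id ∧ ∀ t s : ℝ, Φ (t + s) = Φ t ∘ Φ s

/-- The set of flow-invariant Borel probability measures. -/
def Minv {X : Type*} [TopologicalSpace X] [MeasurableSpace X] (Φ : ℝ → X → X) :
    Set (ProbabilityMeasure X) :=
  {μ | ∀ t : ℝ, (μ : Measure X).map (Φ t) = (μ : Measure X)}

/-- The topological support of a measure. -/
def msupport {X : Type*} [TopologicalSpace X] [MeasurableSpace X] (μ : Measure X) : Set X :=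
  {x | ∀ U : Set X, IsOpen U → x ∈ U → 0 < μ U}

/-- The undamped set `K`: the closure of the union of the supports of all
minimizing invariant measures. -/
def Kset {X : Type*} [TopologicalSpace X] [MeasurableSpace X] (Φ : ℝ → X → X) (a : X → ℝ) :
    Set X :=
  closure (⋃ μ ∈ {μ ∈ Minv Φ | ∫ x, a x ∂(μ : Measure X) = 0}, msupport (μ : Measure X))

/-- Abstract pressure: `P(g) = sup over invariant measures of h(μ) + ∫ g dμ`. -/
def Pres {X : Type*} [TopologicalSpace X] [MeasurableSpace X] (Φ : ℝ → X → X)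
    (h : ProbabilityMeasure X → ℝ) (g : X → ℝ) : ℝ :=
  sSup {r : ℝ | ∃ μ ∈ Minv Φ, r = h μ + ∫ x, g x ∂(μ : Measure X)}

/-- Abstract pressure on `K`: sup over invariant measures with `μ(K) = 1`. -/
def PresK {X : Type*} [TopologicalSpace X] [MeasurableSpace X] (Φ : ℝ → X → X) (a : X → ℝ)
    (h : ProbabilityMeasure X → ℝ) (f : X → ℝ) : ℝ :=
  sSup {r : ℝ | ∃ μ ∈ Minv Φ,
    (μ : Measure X) (Kset Φ a) = 1 ∧ r = h μ + ∫ x, f x ∂(μ : Measure X)}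

/-!
Write `F μ = h μ + ∫ f dμ`. Since `μₙ` realises the pressure,
`P(-βₙ a + f) = F μₙ - βₙ ∫ a dμₙ`, and comparing with a minimizing measure `ν` gives
`F ν ≤ P(-βₙ a + f)`, hence `βₙ ∫ a dμₙ ≤ P(f) - F ν`. As `βₙ → ∞`, the weak limit `μ∞`
is minimizing; it is invariant because invariant measures form a closed set. Dropping the
nonnegative term `βₙ ∫ a dμₙ` and using upper semicontinuity of `F` gives the first inequality.
A minimizing measure is carried by its support, which lies in `K`; this gives the second.
-/

lemma IsFlow.continuous_apply {X : Type*} [TopologicalSpace X] {Φ : ℝ → X → X} (hΦ : IsFlow Φ)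
    (t : ℝ) : Continuous (Φ t) :=
  hΦ.1.comp (Continuous.prodMk_right t)

lemma msupport_eq_support {X : Type*} [TopologicalSpace X] [MeasurableSpace X] (μ : Measure X) :
    msupport μ = μ.support := by
  simp only [msupport, Measure.support_eq_forall_isOpen]
  grind

lemma isClosed_Minv {X : Type*} [TopologicalSpace X] [HasOuterApproxClosed X] [MeasurableSpace X]
    [BorelSpace X] {Φ : ℝ → X → X} (hΦ : ∀ t, Continuous (Φ t)) : IsClosed (Minv Φ) := by
  have hMinv : Minv Φ = ⋂ t, {μ | μ.map (hΦ t).measurable.aemeasurable = μ} := by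
    ext μ
    simp [Minv, ← ProbabilityMeasure.toMeasure_injective.eq_iff]
  rw [hMinv]
  exact isClosed_iInter fun t =>
    isClosed_eq (ProbabilityMeasure.continuous_map (hΦ t)) continuous_id

lemma measure_Kset_eq_one {X : Type*} [TopologicalSpace X] [HereditarilyLindelofSpace X]
    [MeasurableSpace X] [OpensMeasurableSpace X] {Φ : ℝ → X → X} {a : X → ℝ}
    {μ : ProbabilityMeasure X} (hμ : μ ∈ Minv Φ) (hμa : ∫ x, a x ∂(μ : Measure X) = 0) :
    (μ : Measure X) (Kset Φ a) = 1 := by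
  have hsupp : (μ : Measure X).support ⊆ Kset Φ a := by
    rw [← msupport_eq_support]
    exact (subset_biUnion_of_mem (u := fun ν : ProbabilityMeasure X => msupport (ν : Measure X))
      (show μ ∈ {ν ∈ Minv Φ | ∫ x, a x ∂(ν : Measure X) = 0} from ⟨hμ, hμa⟩)).trans subset_closure
  refine (prob_compl_eq_zero_iff isClosed_closure.measurableSet).mp ?_
  exact measure_mono_null (compl_subset_compl.mpr hsupp) Measure.measure_compl_support

section Pressure

variable {X : Type*} [TopologicalSpace X] [CompactSpace X] [MeasurableSpace X]
  [OpensMeasurableSpace X] {Φ : ℝ → X → X} {h : ProbabilityMeasure X → ℝ}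

lemma bddAbove_range_integral {g : X → ℝ} (hg : Continuous g) :
    BddAbove (range fun μ : ProbabilityMeasure X => ∫ x, g x ∂(μ : Measure X)) :=
  (BoundedContinuousFunction.isBounded_range_integral (fun μ : ProbabilityMeasure X => μ)
    (BoundedContinuousFunction.mkOfCompact ⟨g, hg⟩)).bddAbove

lemma bddAbove_pressure_set (hh : BddAbove (h '' Minv Φ)) {g : X → ℝ} (hg : Continuous g) :
    BddAbove {r : ℝ | ∃ μ ∈ Minv Φ, r = h μ + ∫ x, g x ∂(μ : Measure X)} := by
  refine (hh.add (bddAbove_range_integral hg)).mono ?_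
  rintro _ ⟨μ, hμ, rfl⟩
  exact add_mem_add (mem_image_of_mem h hμ) (mem_range_self μ)

lemma le_Pres (hh : BddAbove (h '' Minv Φ)) {g : X → ℝ} (hg : Continuous g)
    {μ : ProbabilityMeasure X} (hμ : μ ∈ Minv Φ) :
    h μ + ∫ x, g x ∂(μ : Measure X) ≤ Pres Φ h g :=
  le_csSup (bddAbove_pressure_set hh hg) ⟨μ, hμ, rfl⟩

lemma le_PresK (hh : BddAbove (h '' Minv Φ)) {a f : X → ℝ} (hf : Continuous f)
    {μ : ProbabilityMeasure X} (hμ : μ ∈ Minv Φ) (hK : (μ : Measure X) (Kset Φ a) = 1) :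
    h μ + ∫ x, f x ∂(μ : Measure X) ≤ PresK Φ a h f := by
  refine le_csSup ((bddAbove_pressure_set hh hf).mono ?_) ⟨μ, hμ, hK, rfl⟩
  rintro r ⟨ν, hν, -, hr⟩
  exact ⟨ν, hν, hr⟩

end Pressure

lemma limsup_le_of_upperSemicontinuousWithinAt {α ι : Type*} [TopologicalSpace α] {F : α → ℝ}
    {s : Set α} {x : α} (hF : UpperSemicontinuousWithinAt F s x) {l : Filter ι} {u : ι → α}
    (hu : Tendsto u l (𝓝[s] x)) {v : ι → ℝ} (hvu : ∀ᶠ i in l, v i ≤ F (u i))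
    (hv : IsCoboundedUnder (· ≤ ·) l v) :
    limsup v l ≤ F x := by
  refine le_of_forall_pos_le_add fun ε hε => limsup_le_of_le hv ?_
  filter_upwards [hvu, hu.eventually (hF _ (lt_add_of_pos_right _ hε))] with i hvi hFi
  exact hvi.trans hFi.le

lemma eq_zero_of_tendsto_of_mul_le {ι : Type*} {l : Filter ι} [l.NeBot] {u β : ι → ℝ} {L D : ℝ}
    (hu : Tendsto u l (𝓝 L)) (hu0 : ∀ i, 0 ≤ u i) (hβ : Tendsto β l atTop)
    (hD : ∀ i, β i * u i ≤ D) : L = 0 := by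
  refine le_antisymm (not_lt.mp fun hL => ?_) (ge_of_tendsto' hu hu0)
  obtain ⟨i, hi⟩ := ((hβ.atTop_mul_pos hL hu).eventually_gt_atTop D).exists
  exact (hD i).not_gt hi

theorem stmt8_general {X : Type*} [MetricSpace X] [CompactSpace X] [MeasurableSpace X] [BorelSpace X]
    (Φ : ℝ → X → X) (hΦ : IsFlow Φ)
    (a : X → ℝ) (ha : Continuous a) (ha0 : ∀ x, 0 ≤ a x)
    (hmin : ∃ μ ∈ Minv Φ, ∫ x, a x ∂(μ : Measure X) = 0)
    (h : ProbabilityMeasure X → ℝ)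
    (hbd : ∃ C : ℝ, ∀ μ ∈ Minv Φ, |h μ| ≤ C)
    (husc : UpperSemicontinuousOn h (Minv Φ))
    (f : X → ℝ) (hf : Continuous f)
    (β : ℕ → ℝ) (hβ : Tendsto β atTop atTop)
    (μn : ℕ → ProbabilityMeasure X) (hμn : ∀ n, μn n ∈ Minv Φ)
    (heq : ∀ n, h (μn n) + ∫ x, (-β n * a x + f x) ∂(μn n : Measure X) =
      Pres Φ h (fun x => -β n * a x + f x))
    (μlim : ProbabilityMeasure X) (hlim : Tendsto μn atTop (𝓝 μlim)) :
    limsup (fun n => Pres Φ h (fun x => -β n * a x + f x)) atTop ≤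
        h μlim + ∫ x, f x ∂(μlim : Measure X) ∧
      h μlim + ∫ x, f x ∂(μlim : Measure X) ≤ PresK Φ a h f := by
  obtain ⟨ν, hν, hνa⟩ := hmin
  have hh : BddAbove (h '' Minv Φ) := by
    obtain ⟨C, hC⟩ := hbd
    exact ⟨C, forall_mem_image.mpr fun μ hμ => le_of_abs_le (hC μ hμ)⟩
  set F : ProbabilityMeasure X → ℝ := fun μ => h μ + ∫ x, f x ∂(μ : Measure X)
  have hsplit : ∀ n (μ : ProbabilityMeasure X), h μ + ∫ x, (-β n * a x + f x) ∂(μ : Measure X) =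
      F μ - β n * ∫ x, a x ∂(μ : Measure X) := fun n μ => by
    have hint : ∀ g : X → ℝ, Continuous g → Integrable g (μ : Measure X) := fun g hg =>
      (BoundedContinuousFunction.mkOfCompact ⟨g, hg⟩).integrable _
    rw [integral_add ((hint a ha).const_mul _) (hint f hf), integral_const_mul]
    ring
  have hlow : ∀ n, F ν ≤ Pres Φ h (fun x => -β n * a x + f x) := fun n => by
    have := le_Pres hh (g := fun x => -β n * a x + f x) ((continuous_const.mul ha).add hf) hν
    rwa [hsplit, hνa, mul_zero, sub_zero] at this
  have hdamp : ∀ n, β n * ∫ x, a x ∂(μn n : Measure X) ≤ Pres Φ h f - F ν := fun n => by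
    have := hlow n
    rw [← heq, hsplit] at this
    linarith [le_Pres hh hf (hμn n)]
  have hinv : μlim ∈ Minv Φ :=
    (isClosed_Minv hΦ.continuous_apply).mem_of_tendsto hlim (.of_forall hμn)
  have hcont : ∀ g : X → ℝ, Continuous g →
      Continuous fun μ : ProbabilityMeasure X => ∫ x, g x ∂(μ : Measure X) := fun g hg =>
    ProbabilityMeasure.continuous_integral_continuousMap (⟨g, hg⟩ : C(X, ℝ))
  have hlim_a : ∫ x, a x ∂(μlim : Measure X) = 0 :=
    eq_zero_of_tendsto_of_mul_le (((hcont a ha).tendsto μlim).comp hlim)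
      (fun _ => integral_nonneg ha0) hβ hdamp
  refine ⟨?_, le_PresK hh hf hinv (measure_Kset_eq_one hinv hlim_a)⟩
  refine limsup_le_of_upperSemicontinuousWithinAt
    (UpperSemicontinuousWithinAt.add (husc μlim hinv)
      (hcont f hf).continuousWithinAt.upperSemicontinuousWithinAt)
    (tendsto_nhdsWithin_iff.mpr ⟨hlim, .of_forall hμn⟩) ?_ (isCoboundedUnder_le_of_le atTop hlow)
  filter_upwards [hβ.eventually_ge_atTop 0] with n hn
  rw [← heq, hsplit]
  exact sub_le_self _ (mul_nonneg hn (integral_nonneg ha0))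

/-- Upper bound in the thermodynamic limit. -/
theorem stmt8 {X : Type*} [MetricSpace X] [CompactSpace X] [MeasurableSpace X] [BorelSpace X]
    (Φ : ℝ → X → X) (hΦ : IsFlow Φ)
    (a : X → ℝ) (ha : Continuous a) (ha0 : ∀ x, 0 ≤ a x)
    (hmin : ∃ μ ∈ Minv Φ, ∫ x, a x ∂(μ : Measure X) = 0)
    (h : ProbabilityMeasure X → ℝ)
    (hbd : ∃ C : ℝ, ∀ μ ∈ Minv Φ, |h μ| ≤ C)
    (husc : UpperSemicontinuousOn h (Minv Φ))
    (f : X → ℝ) (hf : Continuous f)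
    (β : ℕ → ℝ) (hβpos : ∀ n, 0 < β n) (hβ : Tendsto β atTop atTop)
    (μn : ℕ → ProbabilityMeasure X) (hμn : ∀ n, μn n ∈ Minv Φ)
    (heq : ∀ n, h (μn n) + ∫ x, (-β n * a x + f x) ∂(μn n : Measure X) =
      Pres Φ h (fun x => -β n * a x + f x))
    (μlim : ProbabilityMeasure X) (hlim : Tendsto μn atTop (𝓝 μlim)) :
    limsup (fun n => Pres Φ h (fun x => -β n * a x + f x)) atTop ≤
        h μlim + ∫ x, f x ∂(μlim : Measure X) ∧
      h μlim + ∫ x, f x ∂(μlim : Measure X) ≤ PresK Φ a h f :=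
  stmt8_general Φ hΦ a ha ha0 hmin h hbd husc f hf β hβ μn hμn heq μlim hlim
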